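/- arXiv:1804.10629 — 3 statements merged into one kernel-verified Lean document; each statement's English description precedes it below -/
import Mathlib

section
/- Let W_1,…,W_{j−1} be n×t real matrices that are pairwise A-orthogonal, i.e. W_lᵀ A W_m = 0 for all l ≠ m, and suppose that for each l ≤ j−2 every column of A W_l lies in the column span of W_1,…,W_{l+1}. Then W_iᵀ A (A W_{j−1}) = 0 for all i ≤ j−3; hence A-orthogonalizing A W_{j−1} against W_1,…,W_{j−1} only requires orthogonalization against W_{j−2} and W_{j−1}: A W_{j−1} − Σ_{l=1}^{j−1} W_l W_lᵀ A (A W_{j−1}) = A W_{j−1} − W_{j−1} W_{j−1}ᵀ A (A W_{j−1}) − W_{j−2} W_{j−2}ᵀ A (A W_{j−1}), assuming additionally W_lᵀ A W_l = I for each l. -/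
open Matrix

/-- Short-recurrence property: if `W_1, …, W_{j-1}` are pairwise A-orthogonal
blocks with `W_lᵀ A W_l = I`, and for each `l ≤ j-2` every column of `A W_l`
lies in the column span of `W_1, …, W_{l+1}`, then `W_iᵀ A (A W_{j-1}) = 0`
for all `i ≤ j-3`; hence A-orthogonalizing `A W_{j-1}` against all the blocks
only involves `W_{j-2}` and `W_{j-1}`. -/
theorem short_recurrence_A_orthogonalization {n t : ℕ} (j : ℕ) (hj : 3 ≤ j)
    (A : Matrix (Fin n) (Fin n) ℝ) (hA : A.PosDef)
    (W : ℕ → Matrix (Fin n) (Fin t) ℝ)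
    (horth : ∀ l m : ℕ, 1 ≤ l → l ≤ j - 1 → 1 ≤ m → m ≤ j - 1 → l ≠ m →
      (W l)ᵀ * A * W m = 0)
    (hnorm : ∀ l : ℕ, 1 ≤ l → l ≤ j - 1 → (W l)ᵀ * A * W l = 1)
    (hspan : ∀ l : ℕ, 1 ≤ l → l ≤ j - 2 → ∀ c : Fin t,
      (fun i => (A * W l) i c) ∈ Submodule.span ℝ
        {v : Fin n → ℝ | ∃ m : ℕ, ∃ c' : Fin t, 1 ≤ m ∧ m ≤ l + 1 ∧
          v = fun i => W m i c'}) :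
    (∀ i : ℕ, 1 ≤ i → i ≤ j - 3 → (W i)ᵀ * A * (A * W (j - 1)) = 0) ∧
    A * W (j - 1) - ∑ l ∈ Finset.Icc 1 (j - 1), W l * ((W l)ᵀ * A * (A * W (j - 1)))
      = A * W (j - 1) - W (j - 1) * ((W (j - 1))ᵀ * A * (A * W (j - 1)))
        - W (j - 2) * ((W (j - 2))ᵀ * A * (A * W (j - 1))) := by
  have hsym : ∀ p k, A p k = A k p := fun p k => by
    simpa using hA.isHermitian.apply k p
  have key : ∀ i : ℕ, 1 ≤ i → i ≤ j - 3 → (W i)ᵀ * A * (A * W (j - 1)) = 0 := by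
    intro i h1 h2
    ext c c'
    have hcol := hspan i h1 (by omega) c
    have hzero : ∀ v ∈ Submodule.span ℝ
        {v : Fin n → ℝ | ∃ m : ℕ, ∃ c' : Fin t, 1 ≤ m ∧ m ≤ i + 1 ∧
          v = fun i => W m i c'},
        v ⬝ᵥ (fun k => (A * W (j - 1)) k c') = 0 := by
      intro v hv
      induction hv using Submodule.span_induction with
      | mem v hv =>
        obtain ⟨m, c'', hm1, hm2, rfl⟩ := hv
        have h0 : (W m)ᵀ * A * W (j - 1) = 0 :=
          horth m (j - 1) hm1 (by omega) (by omega) le_rfl (by omega)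
        have hh : ((W m)ᵀ * (A * W (j - 1))) c'' c' = 0 := by
          rw [← Matrix.mul_assoc, h0]; rfl
        simpa [dotProduct, Matrix.mul_apply, Matrix.transpose_apply] using hh
      | zero => simp
      | add x y _ _ hx hy => simp [add_dotProduct, hx, hy]
      | smul a x _ hx => simp [smul_dotProduct, hx]
    have hAW : ∀ k, ((W i)ᵀ * A) c k = (A * W i) k c := by
      intro k
      simp only [Matrix.mul_apply, Matrix.transpose_apply]
      exact Finset.sum_congr rfl fun p _ => by rw [hsym p k]; ring
    have h1' : ((W i)ᵀ * A * (A * W (j - 1))) c c'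
        = ∑ k, (A * W i) k c * (A * W (j - 1)) k c' := by
      rw [Matrix.mul_apply]
      exact Finset.sum_congr rfl fun k _ => by rw [hAW k]
    have hz := hzero _ hcol
    simp only [dotProduct] at hz
    rw [h1', hz]
    simp
  obtain ⟨k, rfl⟩ : ∃ k, j = k + 3 := ⟨j - 3, by omega⟩
  have key' : ∀ i : ℕ, 1 ≤ i → i ≤ k → (W i)ᵀ * A * (A * W (k + 2)) = 0 :=
    fun i a b => key i a (by omega)
  refine ⟨fun i a b => key' i a b, ?_⟩
  show A * W (k + 2) - ∑ l ∈ Finset.Icc 1 (k + 2), W l * ((W l)ᵀ * A * (A * W (k + 2)))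
      = A * W (k + 2) - W (k + 2) * ((W (k + 2))ᵀ * A * (A * W (k + 2)))
        - W (k + 1) * ((W (k + 1))ᵀ * A * (A * W (k + 2)))
  have hsum : ∑ l ∈ Finset.Icc 1 (k + 2), W l * ((W l)ᵀ * A * (A * W (k + 2)))
      = ∑ l ∈ Finset.Icc 1 k, W l * ((W l)ᵀ * A * (A * W (k + 2)))
        + W (k + 1) * ((W (k + 1))ᵀ * A * (A * W (k + 2)))
        + W (k + 2) * ((W (k + 2))ᵀ * A * (A * W (k + 2))) := by
    rw [Finset.sum_Icc_succ_top (by omega), Finset.sum_Icc_succ_top (by omega)]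
  have hz : ∑ l ∈ Finset.Icc 1 k, W l * ((W l)ᵀ * A * (A * W (k + 2))) = 0 := by
    refine Finset.sum_eq_zero fun l hl => ?_
    rw [Finset.mem_Icc] at hl
    rw [key' l hl.1 hl.2, Matrix.mul_zero]
  rw [hsum, hz]
  abel
end

section
/- Let W_1,…,W_j be n×t real matrices that are pairwise A-orthogonal, i.e. W_lᵀ A W_m = 0 for all l ≠ m, and suppose that for each l ≤ j−1 every column of A W_l lies in the column span of W_1,…,W_{l+1}. Then for every i ≥ 1 and every l with l + i < j, one has W_lᵀ A (Aⁱ W_j) = (Aⁱ W_l)ᵀ A W_j = 0. Consequently, to A-orthogonalize the s blocks A W_j, A² W_j, …, Aˢ W_j against W_1,…,W_j, it suffices to orthogonalize them against the last s+1 blocks W_{j−s},…,W_j. -/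
open Matrix

/-- If `W_1, …, W_j` are pairwise A-orthogonal blocks and for each `l ≤ j-1`
every column of `A W_l` lies in the column span of `W_1, …, W_{l+1}`, then for
every `i ≥ 1` and every `l` with `l + i < j` one has
`W_lᵀ A (Aⁱ W_j) = (Aⁱ W_l)ᵀ A W_j = 0`; hence orthogonalizing
`A W_j, …, Aˢ W_j` against all blocks only involves the last `s+1` blocks. -/
theorem powers_A_orthogonality {n t : ℕ} (j : ℕ) (hj : 1 ≤ j)
    (A : Matrix (Fin n) (Fin n) ℝ) (hA : A.PosDef)
    (W : ℕ → Matrix (Fin n) (Fin t) ℝ)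
    (horth : ∀ l m : ℕ, 1 ≤ l → l ≤ j → 1 ≤ m → m ≤ j → l ≠ m →
      (W l)ᵀ * A * W m = 0)
    (hspan : ∀ l : ℕ, 1 ≤ l → l ≤ j - 1 → ∀ c : Fin t,
      (fun i => (A * W l) i c) ∈ Submodule.span ℝ
        {v : Fin n → ℝ | ∃ m : ℕ, ∃ c' : Fin t, 1 ≤ m ∧ m ≤ l + 1 ∧
          v = fun i => W m i c'}) :
    ∀ i l : ℕ, 1 ≤ i → 1 ≤ l → l + i < j →
      (W l)ᵀ * A * (A ^ i * W j) = (A ^ i * W l)ᵀ * A * W j ∧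
      (W l)ᵀ * A * (A ^ i * W j) = 0 := by
  have hAsymm : Aᵀ = A := hA.isHermitian.eq
  have key : ∀ i, ∀ l, 1 ≤ l → l + i < j → (W l)ᵀ * A * (A ^ i * W j) = 0 := by
    intro i
    induction i with
    | zero =>
      intro l hl hli
      simpa using horth l j hl (by omega) hj le_rfl (by omega)
    | succ i ih =>
      intro l hl hli
      have h1 : (W l)ᵀ * A * (A ^ (i + 1) * W j)
          = (A * W l)ᵀ * (A * (A ^ i * W j)) := by
        rw [transpose_mul, hAsymm, pow_succ']
        simp only [Matrix.mul_assoc]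
      rw [h1]
      ext c c'
      have hmem := hspan l hl (by omega) c
      set B := A * (A ^ i * W j) with hB
      have hval : ∑ k, (A * W l) k c * B k c' = 0 := by
        have : ∀ v ∈ Submodule.span ℝ
            {v : Fin n → ℝ | ∃ m : ℕ, ∃ c' : Fin t, 1 ≤ m ∧ m ≤ l + 1 ∧
              v = fun i => W m i c'}, ∑ k, v k * B k c' = 0 := by
          intro v hv
          induction hv using Submodule.span_induction with
          | mem x hx =>
            obtain ⟨m, c'', hm1, hm2, rfl⟩ := hx
            have hz : (W m)ᵀ * A * (A ^ i * W j) = 0 :=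
              ih m hm1 (by omega)
            have : ((W m)ᵀ * B) c'' c' = 0 := by
              rw [hB, ← Matrix.mul_assoc, hz]; simp
            simpa [Matrix.mul_apply] using this
          | zero => simp
          | add x y _ _ hx hy => simp [add_mul, Finset.sum_add_distrib, hx, hy]
          | smul a x _ hx =>
            simp only [Pi.smul_apply, smul_eq_mul, mul_assoc,
              ← Finset.mul_sum, hx, mul_zero]
        exact this _ hmem
      simp only [Matrix.mul_apply, transpose_apply, Matrix.zero_apply]
      exact hval
  intro i l hi hl hli
  refine ⟨?_, key i l hl hli⟩
  have h2 : (A ^ i * W l)ᵀ = (W l)ᵀ * A ^ i := by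
    rw [transpose_mul, transpose_pow, hAsymm]
  rw [h2, ← Matrix.mul_assoc, Matrix.mul_assoc ((W l)ᵀ), ← pow_mul_comm',
    ← Matrix.mul_assoc]
end

section
/- Let W_1,…,W_s be n×t real matrices that are pairwise A-orthogonal, i.e. W_jᵀ A W_i = 0 for all j ≠ i. Define x_0 ∈ ℝⁿ, r_0 = b − A x_0, and recursively for m = 1,…,s: x_m = x_{m−1} + W_m (W_mᵀ r_{m−1}) and r_m = r_{m−1} − A W_m (W_mᵀ r_{m−1}). Then x_s = x_0 + Σ_{i=1}^{s} W_i W_iᵀ r_0 and r_s = r_0 − Σ_{i=1}^{s} A W_i W_iᵀ r_0. Hence s iterations of SRE-CG produce the same iterate as one s-step SRE-CG iteration in exact arithmetic. -/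
open Matrix

/-- In exact arithmetic, `s` iterations of SRE-CG with pairwise A-orthogonal
blocks `W_1, …, W_s` produce the same iterate as one s-step SRE-CG iteration:
`x_s = x_0 + Σ_{i=1}^s W_i W_iᵀ r_0` and
`r_s = r_0 - Σ_{i=1}^s A W_i W_iᵀ r_0`. -/
theorem sstep_equals_s_iterations {n t : ℕ} (s : ℕ)
    (A : Matrix (Fin n) (Fin n) ℝ) (hA : A.PosDef) (b : Fin n → ℝ)
    (W : ℕ → Matrix (Fin n) (Fin t) ℝ)
    (horth : ∀ i j : ℕ, 1 ≤ i → i ≤ s → 1 ≤ j → j ≤ s → i ≠ j →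
      (W j)ᵀ * A * W i = 0)
    (x r : ℕ → (Fin n → ℝ))
    (hr0 : r 0 = b - A *ᵥ x 0)
    (hx : ∀ m : ℕ, m < s → x (m + 1) = x m + W (m + 1) *ᵥ ((W (m + 1))ᵀ *ᵥ r m))
    (hr : ∀ m : ℕ, m < s →
      r (m + 1) = r m - A *ᵥ (W (m + 1) *ᵥ ((W (m + 1))ᵀ *ᵥ r m))) :
    x s = x 0 + ∑ i ∈ Finset.Icc 1 s, W i *ᵥ ((W i)ᵀ *ᵥ r 0) ∧
    r s = r 0 - ∑ i ∈ Finset.Icc 1 s, A *ᵥ (W i *ᵥ ((W i)ᵀ *ᵥ r 0)) := by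
  suffices h : ∀ m, m ≤ s → x m = x 0 + ∑ i ∈ Finset.Icc 1 m, W i *ᵥ ((W i)ᵀ *ᵥ r 0) ∧
      r m = r 0 - ∑ i ∈ Finset.Icc 1 m, A *ᵥ (W i *ᵥ ((W i)ᵀ *ᵥ r 0)) from h s le_rfl
  intro m hm
  induction m with
  | zero => simp
  | succ m ih =>
    obtain ⟨hxm, hrm⟩ := ih (Nat.le_of_succ_le hm)
    have hms : m < s := hm
    have key : (W (m+1))ᵀ *ᵥ r m = (W (m+1))ᵀ *ᵥ r 0 := by
      rw [hrm, Matrix.mulVec_sub]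
      have hz : (W (m+1))ᵀ *ᵥ (∑ i ∈ Finset.Icc 1 m, A *ᵥ (W i *ᵥ ((W i)ᵀ *ᵥ r 0))) = 0 := by
        simp only [← Matrix.mulVecLin_apply, map_sum]
        simp only [Matrix.mulVecLin_apply]
        apply Finset.sum_eq_zero
        intro i hi
        simp only [Finset.mem_Icc] at hi
        have h0 := horth i (m+1) hi.1 (le_trans hi.2 (Nat.le_of_lt hms)) (by omega) hm (by omega)
        calc (W (m+1))ᵀ *ᵥ (A *ᵥ (W i *ᵥ ((W i)ᵀ *ᵥ r 0)))
            = ((W (m+1))ᵀ * A * W i) *ᵥ ((W i)ᵀ *ᵥ r 0) := by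
              rw [← Matrix.mulVec_mulVec, ← Matrix.mulVec_mulVec]
          _ = 0 := by rw [h0]; simp
      rw [hz, sub_zero]
    refine ⟨?_, ?_⟩
    · rw [hx m hms, key, hxm, Finset.sum_Icc_succ_top (by omega : 1 ≤ m + 1)]
      abel
    · rw [hr m hms, key, hrm, Finset.sum_Icc_succ_top (by omega : 1 ≤ m + 1)]
      abel
end
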